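/- The commutator of the intrinsic derivative and the intrinsic prolongation is the vector field [𝔇_j, 𝔭𝔯_Q] = Σ (𝔇_{J^α M} Q^{i^α} − 𝔭𝔯_Q 𝔇_M P^α) ∂/∂u^{i^α}_{J^α M / j}, the sum over parametric indices (i^α, J^α M / j) ∈ S \ S_j. -/

import Mathlib

open MvPolynomial

/-- Jet variables: the independent variables `x i` and the derivatives `u^α_K`. -/
abbrev JetVar (p q : ℕ) := Sum (Fin p) (Fin q × (Fin p →₀ ℕ))

/-- The ring `A` of differential (polynomial) functions on the jet manifold. -/
abbrev JetRing (p q : ℕ) := MvPolynomial (JetVar p q) ℚ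

/-- The total differential operator `D_i = ∂/∂x_i + Σ_{α,K} u^α_{Ki} ∂/∂u^α_K`. -/
noncomputable def totalD (p q : ℕ) (i : Fin p) :
    Derivation ℚ (JetRing p q) (JetRing p q) :=
  MvPolynomial.mkDerivation ℚ (fun v => match v with
    | Sum.inl j => if i = j then 1 else 0
    | Sum.inr (α, K) => X (Sum.inr (α, K + Finsupp.single i 1)))

/-- The multi total differential operator `D_K = D_1^{K_1} ∘ ⋯ ∘ D_p^{K_p}`. -/
noncomputable def DmultiK (p q : ℕ) (K : Fin p →₀ ℕ) :
    Module.End ℚ (JetRing p q) :=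
  (List.finRange p).foldr (fun i f => ((totalD p q i).toLinearMap ^ (K i)) * f) 1

/-- A system of PDEs `u^{i^α}_{J^α} = P^α` together with a ranking `rk` on
`ℕ_q × ℕ^p`: a total order which is positive and compatible with addition,
and with all `J^α ≠ 0`. -/
structure OrthoSystem (p q n : ℕ) where
  ii : Fin n → Fin q
  JJ : Fin n → (Fin p →₀ ℕ)
  P : Fin n → JetRing p q
  rk : (Fin q × (Fin p →₀ ℕ)) → (Fin q × (Fin p →₀ ℕ)) → Prop
  rk_refl : ∀ a, rk a a
  rk_total : ∀ a b, rk a b ∨ rk b a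
  rk_antisymm : ∀ a b, rk a b → rk b a → a = b
  rk_trans : ∀ a b c, rk a b → rk b c → rk a c
  rk_pos : ∀ (j : Fin q) (K L : Fin p →₀ ℕ), rk (j, K) (j, K + L)
  rk_compat : ∀ (i j : Fin q) (J K L : Fin p →₀ ℕ),
    rk (i, J) (j, K) ↔ rk (i, J + L) (j, K + L)
  J_ne : ∀ α, JJ α ≠ 0

variable {p q n : ℕ}

/-- The strict part of the ranking. -/
def OrthoSystem.rlt (S : OrthoSystem p q n) (a b : Fin q × (Fin p →₀ ℕ)) : Prop :=
  S.rk a b ∧ a ≠ b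

/-- A derivative `u^j_K` is principal if `(j,K) = (i^α, J^α L)` for some `α, L`. -/
def OrthoSystem.principal (S : OrthoSystem p q n) (v : Fin q × (Fin p →₀ ℕ)) : Prop :=
  ∃ (α : Fin n) (L : Fin p →₀ ℕ), v = (S.ii α, S.JJ α + L)

/-- `Q` belongs to the subring `B` of functions of parametric derivatives only. -/
def OrthoSystem.inB (S : OrthoSystem p q n) (Q : JetRing p q) : Prop :=
  ∀ (jK : Fin q × (Fin p →₀ ℕ)), Sum.inr jK ∈ Q.vars → ¬ S.principal jK

/-- Orthonomy: `P^α` depends only on parametric derivatives `u^j_K` with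
`(j,K) < (i^α, J^α)`. -/
def OrthoSystem.orthonomic (S : OrthoSystem p q n) : Prop :=
  ∀ (α : Fin n) (jK : Fin q × (Fin p →₀ ℕ)), Sum.inr jK ∈ (S.P α).vars →
    ¬ S.principal jK ∧ S.rlt jK (S.ii α, S.JJ α)

/-- Passivity: `(i^α, J^α K) = (i^β, J^β L)` implies `D_K P^α = D_L P^β`. -/
def OrthoSystem.passive (S : OrthoSystem p q n) : Prop :=
  ∀ (α β : Fin n) (K L : Fin p →₀ ℕ),
    (S.ii α, S.JJ α + K) = (S.ii β, S.JJ β + L) →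
    DmultiK p q K (S.P α) = DmultiK p q L (S.P β)

/-- The differential ideal generated by the `Δ^α = u^{i^α}_{J^α} − P^α`. -/
noncomputable def OrthoSystem.diffIdeal (S : OrthoSystem p q n) : Ideal (JetRing p q) :=
  Ideal.span { x | ∃ (α : Fin n) (L : Fin p →₀ ℕ),
    x = DmultiK p q L (X (Sum.inr (S.ii α, S.JJ α)) - S.P α) }

open Classical in
/-- The reduction `Q ↦ Q̃`: the element of `B` congruent to `Q` modulo the
differential ideal generated by `Δ` (when it exists). -/
noncomputable def OrthoSystem.red (S : OrthoSystem p q n) (Q : JetRing p q) :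
    JetRing p q :=
  if h : ∃ R, S.inB R ∧ Q - R ∈ S.diffIdeal then h.choose else 0

/-- The intrinsic multi-differential operator `𝔇_K P = (D_K P)~`. -/
noncomputable def OrthoSystem.dfrakK (S : OrthoSystem p q n) (K : Fin p →₀ ℕ)
    (Q : JetRing p q) : JetRing p q :=
  S.red (DmultiK p q K Q)

/-- The intrinsic total differential operator `𝔇_j P = (D_j P)~`. -/
noncomputable def OrthoSystem.dfrak (S : OrthoSystem p q n) (j : Fin p)
    (Q : JetRing p q) : JetRing p q :=
  S.red (totalD p q j Q)

open Classical in
/-- The intrinsic prolongation `𝔭𝔯_Q = Σ_{(j,K)∈S} (𝔇_K Q^j) ∂/∂u^j_K`. -/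
noncomputable def OrthoSystem.iprolong (S : OrthoSystem p q n)
    (Q : Fin q → JetRing p q) : Derivation ℚ (JetRing p q) (JetRing p q) :=
  MvPolynomial.mkDerivation ℚ (fun v => match v with
    | Sum.inl _ => 0
    | Sum.inr (j, K) => if S.principal (j, K) then 0 else S.dfrakK K (Q j))

open Classical in
/-- The vector field `Σ (𝔇_{J^α M} Q^{i^α} − 𝔭𝔯_Q 𝔇_M P^α) ∂/∂u^{i^α}_{J^α M/j}`,
the sum being over parametric indices `(i^α, J^α M/j) ∈ S \ S_j`, i.e. over
parametric `(k,L)` with `(k,Lj) = (i^α, J^α M)` principal. -/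
noncomputable def OrthoSystem.commField (S : OrthoSystem p q n)
    (Q : Fin q → JetRing p q) (j : Fin p) :
    Derivation ℚ (JetRing p q) (JetRing p q) :=
  MvPolynomial.mkDerivation ℚ (fun v => match v with
    | Sum.inl _ => 0
    | Sum.inr (k, L) =>
      if h : ¬ S.principal (k, L) ∧ S.principal (k, L + Finsupp.single j 1) then
        S.dfrakK (S.JJ h.2.choose + h.2.choose_spec.choose) (Q (S.ii h.2.choose))
          - S.iprolong Q (S.dfrakK h.2.choose_spec.choose (S.P h.2.choose))
      else 0)

/-!
The ranking is a well-order (Dickson's lemma), so replacing every principal derivative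
`u^{i^α}_{J^α M}` by the reduced form of `D_M P^α` defines, by well-founded recursion, an algebra
endomorphism `ρ` of the jet ring (`reduceHom`). Orthonomy makes `ρ` a retraction onto the ring `B`
of functions of parametric derivatives with `Q - ρ Q` in the differential ideal, and passivity puts
the ideal in its kernel; hence `Q̃ = ρ Q` and `ρ ∘ D_j ∘ ρ = ρ ∘ D_j`. Both sides of the formula
then obey the Leibniz rule on `B`, and on a parametric `u^k_L` the left side is
`𝔇_{Lj} Q^k − 𝔭𝔯_Q (u^k_{Lj})~`: the stated coefficient if `u^k_{Lj}` is principal, `0` otherwise.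
-/

theorem Finsupp.induction_add_single_one {ι : Type*} {motive : (ι →₀ ℕ) → Prop}
    (zero : motive 0) (add_single : ∀ K i, motive K → motive (K + Finsupp.single i 1))
    (K : ι →₀ ℕ) : motive K := by
  classical
  obtain ⟨s, rfl⟩ := Multiset.toFinsupp.surjective K
  induction s using Multiset.induction_on with
  | empty => simpa using zero
  | cons i s ih =>
    rw [← Multiset.singleton_add, add_comm, map_add, Multiset.toFinsupp_singleton]
    exact add_single _ i ih

theorem List.prod_map_pow_add_single {M ι : Type*} [Monoid M] (a : ι → M) (K : ι →₀ ℕ)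
    {i : ι} (hi : ∀ k, Commute (a i) (a k)) {l : List ι} (hl : l.Nodup) (hil : i ∈ l) :
    (l.map fun k => a k ^ (K + Finsupp.single i 1 : ι →₀ ℕ) k).prod
      = a i * (l.map fun k => a k ^ K k).prod := by
  induction l with
  | nil => simp at hil
  | cons k l ih =>
    obtain ⟨hkl, hl⟩ := List.nodup_cons.mp hl
    simp only [List.map_cons, List.prod_cons]
    rcases eq_or_ne k i with rfl | hki
    · have htail : l.map (fun m => a m ^ (K + Finsupp.single k 1 : ι →₀ ℕ) m)
          = l.map fun m => a m ^ K m :=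
        List.map_congr_left fun m hm => by
          rw [Finsupp.add_apply, Finsupp.single_eq_of_ne (ne_of_mem_of_not_mem hm hkl), add_zero]
      rw [htail, Finsupp.add_apply, Finsupp.single_eq_same, pow_succ', mul_assoc]
    · rw [Finsupp.add_apply, Finsupp.single_eq_of_ne hki, add_zero,
        ih hl (List.mem_of_ne_of_mem hki.symm hil)]
      exact ((hi k).pow_right (K k)).symm.left_comm _

theorem MvPolynomial.aeval_eqOn_supported {σ R A : Type*} [CommSemiring R] [CommSemiring A]
    [Algebra R A] {g₁ g₂ : σ → A} {s : Set σ} (h : Set.EqOn g₁ g₂ s)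
    {f : MvPolynomial σ R} (hf : f ∈ supported R s) : aeval g₁ f = aeval g₂ f :=
  AlgHom.adjoin_le_equalizer (aeval g₁) (aeval g₂)
    (by rintro _ ⟨v, hv, rfl⟩; simpa using h hv) hf

theorem MvPolynomial.aeval_mem_supported {σ τ R : Type*} [CommSemiring R]
    {g : σ → MvPolynomial τ R} {s : Set σ} {t : Set τ} (hg : ∀ v ∈ s, g v ∈ supported R t)
    {f : MvPolynomial σ R} (hf : f ∈ supported R s) : aeval g f ∈ supported R t :=
  Algebra.adjoin_le (S := (supported R t).comap (aeval g))
    (by rintro _ ⟨v, hv, rfl⟩; simpa using hg v hv) hf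

theorem MvPolynomial.sub_aeval_mem_of_mem_supported {σ R : Type*} [CommRing R]
    {I : Ideal (MvPolynomial σ R)} {g : σ → MvPolynomial σ R} {s : Set σ}
    (hg : ∀ v ∈ s, X v - g v ∈ I) {f : MvPolynomial σ R} (hf : f ∈ supported R s) :
    f - aeval g f ∈ I := by
  rw [← Ideal.Quotient.eq]
  exact AlgHom.adjoin_le_equalizer (Ideal.Quotient.mkₐ R I)
    ((Ideal.Quotient.mkₐ R I).comp (aeval g))
    (by rintro _ ⟨v, hv, rfl⟩; simpa [Ideal.Quotient.eq] using hg v hv) hf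

theorem MvPolynomial.derivation_mem_supported {σ R : Type*} [CommSemiring R]
    (D : Derivation R (MvPolynomial σ R) (MvPolynomial σ R)) {s t : Set σ} (hst : s ⊆ t)
    (hD : ∀ v ∈ s, D (X v) ∈ supported R t) {f : MvPolynomial σ R}
    (hf : f ∈ supported R s) : D f ∈ supported R t := by
  rw [supported_eq_adjoin_X] at hf
  induction hf using Algebra.adjoin_induction with
  | mem _ hx => obtain ⟨v, hv, rfl⟩ := hx; exact hD v hv
  | algebraMap r => simp
  | add x y _ _ hx hy => rw [map_add]; exact add_mem hx hy
  | mul x y hx' hy' hx hy =>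
    rw [Derivation.leibniz, smul_eq_mul, smul_eq_mul]
    exact add_mem (mul_mem (supported_mono hst hx') hy) (mul_mem (supported_mono hst hy') hx)

theorem Derivation.mem_span_of_forall_mem_span {R A : Type*} [CommSemiring R] [CommRing A]
    [Algebra R A] (D : Derivation R A A) {s : Set A} (hs : ∀ x ∈ s, D x ∈ Ideal.span s)
    {x : A} (hx : x ∈ Ideal.span s) : D x ∈ Ideal.span s := by
  induction hx using Submodule.span_induction with
  | mem x hx => exact hs x hx
  | zero => simp
  | add x y _ _ hx hy => rw [map_add]; exact add_mem hx hy
  | smul a x hx' hx =>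
    rw [smul_eq_mul, Derivation.leibniz, smul_eq_mul, smul_eq_mul]
    exact add_mem (Ideal.mul_mem_left _ _ hx) (Ideal.mul_mem_right _ _ hx')

@[simp]
theorem totalD_X_inl (i j : Fin p) :
    totalD p q i (X (Sum.inl j)) = if i = j then 1 else 0 :=
  mkDerivation_X _ _ _

@[simp]
theorem totalD_X_inr (i : Fin p) (k : Fin q) (L : Fin p →₀ ℕ) :
    totalD p q i (X (Sum.inr (k, L))) = X (Sum.inr (k, L + Finsupp.single i 1)) :=
  mkDerivation_X _ _ _

theorem totalD_commute (i k : Fin p) :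
    Commute (totalD p q i).toLinearMap (totalD p q k).toLinearMap := by
  have h : ⁅totalD p q i, totalD p q k⁆ = 0 := by
    refine derivation_ext ?_
    rintro (j | ⟨k', L⟩)
    · simp only [Derivation.commutator_apply, totalD_X_inl]
      split_ifs <;> simp
    · simp [Derivation.commutator_apply, add_right_comm]
  have := congrArg Derivation.toLinearMap h
  rw [Derivation.commutator_coe_linear_map, Ring.lie_def] at this
  exact sub_eq_zero.mp this

theorem DmultiK_eq_prod (K : Fin p →₀ ℕ) :
    DmultiK p q K = ((List.finRange p).map fun i => (totalD p q i).toLinearMap ^ K i).prod := by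
  rw [DmultiK, List.prod, List.foldr_map]

theorem DmultiK_zero : DmultiK p q 0 = 1 := by
  simp [DmultiK_eq_prod]

theorem DmultiK_add_single (K : Fin p →₀ ℕ) (i : Fin p) :
    DmultiK p q (K + Finsupp.single i 1) = (totalD p q i).toLinearMap * DmultiK p q K := by
  simp only [DmultiK_eq_prod]
  exact List.prod_map_pow_add_single _ K (totalD_commute i) (List.nodup_finRange p)
    (List.mem_finRange i)

theorem DmultiK_add_single_apply (K : Fin p →₀ ℕ) (i : Fin p) (R : JetRing p q) :
    DmultiK p q (K + Finsupp.single i 1) R = totalD p q i (DmultiK p q K R) := by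
  rw [DmultiK_add_single]; rfl

theorem DmultiK_X (K : Fin p →₀ ℕ) (k : Fin q) (L : Fin p →₀ ℕ) :
    DmultiK p q K (X (Sum.inr (k, L))) = X (Sum.inr (k, L + K)) := by
  induction K using Finsupp.induction_add_single_one with
  | zero => simp [DmultiK_zero]
  | add_single K i ih => rw [DmultiK_add_single_apply, ih, totalD_X_inr, add_assoc]

namespace OrthoSystem

variable (S : OrthoSystem p q n)

theorem rk_of_le {k : Fin q} {K L : Fin p →₀ ℕ} (h : K ≤ L) : S.rk (k, K) (k, L) := by
  simpa [add_tsub_cancel_of_le h] using S.rk_pos k K (L - K)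

theorem rk_wellQuasiOrdered : WellQuasiOrdered S.rk := by
  intro f
  obtain ⟨m₁, m₂, hm, hk, hK⟩ :=
    ((Finite.wellQuasiOrdered (· = ·)).prod wellQuasiOrdered_le :
      WellQuasiOrdered fun a b : Fin q × (Fin p →₀ ℕ) => a.1 = b.1 ∧ a.2 ≤ b.2) f
  refine ⟨m₁, m₂, hm, ?_⟩
  rw [show f m₂ = ((f m₁).1, (f m₂).2) from Prod.ext hk.symm rfl]
  exact S.rk_of_le hK

theorem rlt_wf : WellFounded S.rlt := by
  have : IsPreorder _ S.rk := { refl := S.rk_refl, trans := S.rk_trans }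
  exact S.rk_wellQuasiOrdered.wellFounded.mono
    fun a b h => ⟨h.1, fun h' => h.2 (S.rk_antisymm _ _ h.1 h')⟩

theorem rlt_trans {a b c : Fin q × (Fin p →₀ ℕ)} (hab : S.rlt a b) (hbc : S.rlt b c) :
    S.rlt a c :=
  ⟨S.rk_trans _ _ _ hab.1 hbc.1, by rintro rfl; exact hab.2 (S.rk_antisymm _ _ hab.1 hbc.1)⟩

theorem rlt_add_right {k l : Fin q} {K L : Fin p →₀ ℕ} (h : S.rlt (k, K) (l, L))
    (N : Fin p →₀ ℕ) : S.rlt (k, K + N) (l, L + N) :=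
  ⟨(S.rk_compat k l K L N).mp h.1, by simpa using h.2⟩

theorem rlt_self_add {k : Fin q} {K N : Fin p →₀ ℕ} (hN : N ≠ 0) : S.rlt (k, K) (k, K + N) :=
  ⟨S.rk_pos k K N, by simpa [eq_comm] using hN⟩

def varsBelow (b : Fin q × (Fin p →₀ ℕ)) : Set (JetVar p q) :=
  {v | ∀ w, v = Sum.inr w → S.rlt w b}

theorem varsBelow_mono {b b' : Fin q × (Fin p →₀ ℕ)} (h : S.rlt b b') :
    S.varsBelow b ⊆ S.varsBelow b' :=
  fun _ hv w hw => S.rlt_trans (hv w hw) h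

def parametricVars : Set (JetVar p q) :=
  {v | ∀ w, v = Sum.inr w → ¬ S.principal w}

theorem inB_iff_mem_supported {R : JetRing p q} :
    S.inB R ↔ R ∈ supported ℚ S.parametricVars := by
  rw [mem_supported]
  exact ⟨fun h v hv w hw => h w (hw ▸ hv), fun h w hw => h hw w rfl⟩

theorem inB_red (R : JetRing p q) : S.inB (S.red R) := by
  unfold red
  split_ifs with h
  · exact h.choose_spec.1
  · simp [inB]

theorem P_mem_supported_varsBelow (hS : S.orthonomic) (α : Fin n) :
    S.P α ∈ supported ℚ (S.varsBelow (S.ii α, S.JJ α)) := by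
  rw [mem_supported]
  rintro v hv w rfl
  exact (hS α w hv).2

theorem totalD_mem_supported_varsBelow (i : Fin p) {k : Fin q} {L : Fin p →₀ ℕ}
    {R : JetRing p q} (hR : R ∈ supported ℚ (S.varsBelow (k, L))) :
    totalD p q i R ∈ supported ℚ (S.varsBelow (k, L + Finsupp.single i 1)) := by
  refine derivation_mem_supported _ (S.varsBelow_mono (S.rlt_self_add (by simp))) ?_ hR
  rintro (j | ⟨l, K⟩) hv
  · rw [totalD_X_inl]
    split_ifs
    · exact one_mem _
    · exact zero_mem _
  · rw [totalD_X_inr, X_mem_supported]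
    rintro w hw
    cases Sum.inr_injective hw
    exact S.rlt_add_right (hv _ rfl) _

theorem DmultiK_mem_supported_varsBelow (M : Fin p →₀ ℕ) {k : Fin q} {L : Fin p →₀ ℕ}
    {R : JetRing p q} (hR : R ∈ supported ℚ (S.varsBelow (k, L))) :
    DmultiK p q M R ∈ supported ℚ (S.varsBelow (k, L + M)) := by
  induction M using Finsupp.induction_add_single_one with
  | zero => simpa [DmultiK_zero] using hR
  | add_single M i ih =>
    rw [DmultiK_add_single_apply, ← add_assoc]
    exact S.totalD_mem_supported_varsBelow i ih

theorem DmultiK_choose_mem_supported_varsBelow (hS : S.orthonomic)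
    {w : Fin q × (Fin p →₀ ℕ)} (h : S.principal w) :
    DmultiK p q h.choose_spec.choose (S.P h.choose) ∈ supported ℚ (S.varsBelow w) := by
  have := S.DmultiK_mem_supported_varsBelow h.choose_spec.choose
    (S.P_mem_supported_varsBelow hS h.choose)
  rwa [← h.choose_spec.choose_spec] at this

open Classical in
/-- Only coordinates ranked below `w` are replaced recursively; by orthonomy these are the only
ones occurring in `D_M P^α`. -/
noncomputable def reduceU : Fin q × (Fin p →₀ ℕ) → JetRing p q :=
  S.rlt_wf.fix fun w reduceBelow =>
    if h : S.principal w then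
      aeval (Sum.elim (fun i => X (Sum.inl i))
          fun w' => if hw' : S.rlt w' w then reduceBelow w' hw' else X (Sum.inr w'))
        (DmultiK p q h.choose_spec.choose (S.P h.choose))
    else X (Sum.inr w)

noncomputable def reduceVar : JetVar p q → JetRing p q :=
  Sum.elim (fun i => X (Sum.inl i)) S.reduceU

noncomputable def reduceHom : JetRing p q →ₐ[ℚ] JetRing p q :=
  aeval S.reduceVar

@[simp]
theorem reduceHom_X_inl (i : Fin p) : S.reduceHom (X (Sum.inl i)) = X (Sum.inl i) :=
  aeval_X _ _

@[simp]
theorem reduceHom_X_inr (w : Fin q × (Fin p →₀ ℕ)) :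
    S.reduceHom (X (Sum.inr w)) = S.reduceU w :=
  aeval_X _ _

theorem reduceU_of_not_principal {w : Fin q × (Fin p →₀ ℕ)} (h : ¬ S.principal w) :
    S.reduceU w = X (Sum.inr w) := by
  rw [reduceU, WellFounded.fix_eq, dif_neg h]

theorem reduceU_of_principal (hS : S.orthonomic) {w : Fin q × (Fin p →₀ ℕ)}
    (h : S.principal w) :
    S.reduceU w = S.reduceHom (DmultiK p q h.choose_spec.choose (S.P h.choose)) := by
  rw [reduceU, WellFounded.fix_eq, dif_pos h]
  refine aeval_eqOn_supported ?_ (S.DmultiK_choose_mem_supported_varsBelow hS h)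
  rintro (i | w') hw'
  · rfl
  · exact dif_pos (hw' w' rfl)

theorem reduceU_ii_JJ_add (hS : S.orthonomic) (hpass : S.passive) (α : Fin n)
    (M : Fin p →₀ ℕ) :
    S.reduceU (S.ii α, S.JJ α + M) = S.reduceHom (DmultiK p q M (S.P α)) := by
  have h : S.principal (S.ii α, S.JJ α + M) := ⟨α, M, rfl⟩
  rw [S.reduceU_of_principal hS h, hpass _ _ _ _ h.choose_spec.choose_spec.symm]

theorem X_inl_mem_supported_parametricVars (i : Fin p) :
    X (Sum.inl i) ∈ supported ℚ S.parametricVars :=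
  X_mem_supported.mpr fun _ h => (Sum.inl_ne_inr h).elim

theorem reduceVar_mem_supported (hS : S.orthonomic) (v : JetVar p q) :
    S.reduceVar v ∈ supported ℚ S.parametricVars := by
  rcases v with i | w
  · exact S.X_inl_mem_supported_parametricVars i
  induction w using S.rlt_wf.induction with
  | _ w ih =>
  by_cases h : S.principal w
  · rw [reduceVar, Sum.elim_inr, S.reduceU_of_principal hS h]
    refine aeval_mem_supported ?_ (S.DmultiK_choose_mem_supported_varsBelow hS h)
    rintro (i | w') hw'
    · exact S.X_inl_mem_supported_parametricVars i
    · exact ih w' (hw' w' rfl)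
  · rw [reduceVar, Sum.elim_inr, S.reduceU_of_not_principal h, X_mem_supported]
    rintro _ hw
    cases Sum.inr_injective hw
    exact h

theorem inB_reduceHom (hS : S.orthonomic) (R : JetRing p q) : S.inB (S.reduceHom R) :=
  S.inB_iff_mem_supported.mpr <|
    aeval_mem_supported (fun v _ => S.reduceVar_mem_supported hS v)
      (mem_supported.mpr (Set.subset_univ _))

theorem reduceHom_of_inB {R : JetRing p q} (h : S.inB R) : S.reduceHom R = R := by
  conv_rhs => rw [← aeval_X_left_apply R]
  refine aeval_eqOn_supported ?_ (S.inB_iff_mem_supported.mp h)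
  rintro (i | w) hw
  · rfl
  · exact S.reduceU_of_not_principal (hw w rfl)

theorem reduceHom_eq_zero_of_mem_diffIdeal (hS : S.orthonomic) (hpass : S.passive)
    {R : JetRing p q} (h : R ∈ S.diffIdeal) : S.reduceHom R = 0 := by
  refine (Ideal.span_le (I := RingHom.ker S.reduceHom)).mpr ?_ h
  rintro _ ⟨α, L, rfl⟩
  rw [SetLike.mem_coe, RingHom.mem_ker, map_sub, DmultiK_X, map_sub, reduceHom_X_inr,
    S.reduceU_ii_JJ_add hS hpass, sub_self]

theorem X_sub_reduceVar_mem_diffIdeal (hS : S.orthonomic) (v : JetVar p q) :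
    X v - S.reduceVar v ∈ S.diffIdeal := by
  rcases v with i | w
  · simp [reduceVar]
  induction w using S.rlt_wf.induction with
  | _ w ih =>
  by_cases h : S.principal w
  · set α := h.choose
    set M := h.choose_spec.choose
    have hgen : X (Sum.inr w) - DmultiK p q M (S.P α) ∈ S.diffIdeal := by
      refine Ideal.subset_span ⟨α, M, ?_⟩
      rw [map_sub, DmultiK_X, ← h.choose_spec.choose_spec]
    have hred : DmultiK p q M (S.P α) - S.reduceHom (DmultiK p q M (S.P α)) ∈ S.diffIdeal := by
      refine sub_aeval_mem_of_mem_supported ?_ (S.DmultiK_choose_mem_supported_varsBelow hS h)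
      rintro (i | w') hw'
      · simp [reduceVar]
      · exact ih w' (hw' w' rfl)
    have := add_mem hgen hred
    rwa [sub_add_sub_cancel, ← S.reduceU_of_principal hS h] at this
  · simp [reduceVar, S.reduceU_of_not_principal h]

theorem sub_reduceHom_mem_diffIdeal (hS : S.orthonomic) (R : JetRing p q) :
    R - S.reduceHom R ∈ S.diffIdeal :=
  sub_aeval_mem_of_mem_supported (fun v _ => S.X_sub_reduceVar_mem_diffIdeal hS v)
    (mem_supported.mpr (Set.subset_univ _))

theorem red_eq_reduceHom (hS : S.orthonomic) (hpass : S.passive) (R : JetRing p q) :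
    S.red R = S.reduceHom R := by
  have hex : ∃ R', S.inB R' ∧ R - R' ∈ S.diffIdeal :=
    ⟨_, S.inB_reduceHom hS R, S.sub_reduceHom_mem_diffIdeal hS R⟩
  obtain ⟨hB, hmem⟩ := hex.choose_spec
  have := S.reduceHom_eq_zero_of_mem_diffIdeal hS hpass hmem
  rw [map_sub, S.reduceHom_of_inB hB, sub_eq_zero] at this
  rw [red, dif_pos hex, this]

theorem dfrak_eq_reduceHom (hS : S.orthonomic) (hpass : S.passive) (j : Fin p)
    (R : JetRing p q) : S.dfrak j R = S.reduceHom (totalD p q j R) :=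
  S.red_eq_reduceHom hS hpass _

theorem dfrakK_eq_reduceHom (hS : S.orthonomic) (hpass : S.passive) (K : Fin p →₀ ℕ)
    (R : JetRing p q) : S.dfrakK K R = S.reduceHom (DmultiK p q K R) :=
  S.red_eq_reduceHom hS hpass _

theorem totalD_mem_diffIdeal (j : Fin p) {R : JetRing p q} (h : R ∈ S.diffIdeal) :
    totalD p q j R ∈ S.diffIdeal := by
  refine (totalD p q j).mem_span_of_forall_mem_span ?_ h
  rintro _ ⟨α, L, rfl⟩
  exact Ideal.subset_span ⟨α, L + Finsupp.single j 1, (DmultiK_add_single_apply _ _ _).symm⟩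

theorem reduceHom_totalD_reduceHom (hS : S.orthonomic) (hpass : S.passive) (j : Fin p)
    (R : JetRing p q) :
    S.reduceHom (totalD p q j (S.reduceHom R)) = S.reduceHom (totalD p q j R) := by
  have := S.reduceHom_eq_zero_of_mem_diffIdeal hS hpass
    (S.totalD_mem_diffIdeal j (S.sub_reduceHom_mem_diffIdeal hS R))
  rwa [map_sub, map_sub, sub_eq_zero, eq_comm] at this

variable (Q : Fin q → JetRing p q)

@[simp]
theorem iprolong_X_inl (i : Fin p) : S.iprolong Q (X (Sum.inl i)) = 0 :=
  mkDerivation_X _ _ _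

theorem iprolong_X_of_not_principal {k : Fin q} {L : Fin p →₀ ℕ} (h : ¬ S.principal (k, L)) :
    S.iprolong Q (X (Sum.inr (k, L))) = S.dfrakK L (Q k) := by
  rw [iprolong, mkDerivation_X]
  exact if_neg h

theorem inB_iprolong {R : JetRing p q} (hR : S.inB R) : S.inB (S.iprolong Q R) := by
  rw [inB_iff_mem_supported] at hR ⊢
  refine derivation_mem_supported _ le_rfl ?_ hR
  rintro (i | ⟨k, L⟩) hv
  · simp
  · rw [S.iprolong_X_of_not_principal Q (hv _ rfl), ← inB_iff_mem_supported]
    exact S.inB_red _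

@[simp]
theorem commField_X_inl (j i : Fin p) : S.commField Q j (X (Sum.inl i)) = 0 :=
  mkDerivation_X _ _ _

theorem commField_X_of_not_principal_add {j : Fin p} {k : Fin q} {L : Fin p →₀ ℕ}
    (h : ¬ S.principal (k, L + Finsupp.single j 1)) :
    S.commField Q j (X (Sum.inr (k, L))) = 0 := by
  rw [commField, mkDerivation_X]
  exact dif_neg fun h' => h h'.2

theorem commField_X_of_add_single_eq (hpass : S.passive) {j : Fin p} {k : Fin q}
    {L : Fin p →₀ ℕ} {α : Fin n} {M : Fin p →₀ ℕ} (hnp : ¬ S.principal (k, L))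
    (hw : (k, L + Finsupp.single j 1) = (S.ii α, S.JJ α + M)) :
    S.commField Q j (X (Sum.inr (k, L)))
      = S.dfrakK (S.JJ α + M) (Q (S.ii α)) - S.iprolong Q (S.dfrakK M (S.P α)) := by
  have h : ¬ S.principal (k, L) ∧ S.principal (k, L + Finsupp.single j 1) := ⟨hnp, α, M, hw⟩
  rw [commField, mkDerivation_X]
  refine (dif_pos h).trans ?_
  have hchoose := h.2.choose_spec.choose_spec.symm.trans hw
  obtain ⟨hi, hJ⟩ := Prod.mk.inj hchoose
  rw [hJ, dfrakK, dfrakK, hpass _ _ _ _ hchoose, hi]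
  rfl

variable {S Q}

theorem reduceHom_totalD_iprolong_sub_X (hS : S.orthonomic) (hpass : S.passive) (j : Fin p)
    {v : JetVar p q} (hv : v ∈ S.parametricVars) :
    S.reduceHom (totalD p q j (S.iprolong Q (X v)))
        - S.iprolong Q (S.reduceHom (totalD p q j (X v)))
      = S.commField Q j (X v) := by
  rcases v with i | ⟨k, L⟩
  · rw [iprolong_X_inl, commField_X_inl, totalD_X_inl]
    split_ifs <;> simp
  have hnp : ¬ S.principal (k, L) := hv _ rfl
  rw [S.iprolong_X_of_not_principal Q hnp, S.dfrakK_eq_reduceHom hS hpass,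
    S.reduceHom_totalD_reduceHom hS hpass, ← DmultiK_add_single_apply, totalD_X_inr,
    reduceHom_X_inr]
  by_cases h : S.principal (k, L + Finsupp.single j 1)
  · obtain ⟨α, M, hw⟩ := h
    rw [S.commField_X_of_add_single_eq Q hpass hnp hw, hw, S.reduceU_ii_JJ_add hS hpass,
      S.dfrakK_eq_reduceHom hS hpass, S.dfrakK_eq_reduceHom hS hpass]
    obtain ⟨rfl, hL⟩ := Prod.mk.inj hw
    rw [hL]
  · rw [S.commField_X_of_not_principal_add Q h, S.reduceU_of_not_principal h,
      S.iprolong_X_of_not_principal Q h, S.dfrakK_eq_reduceHom hS hpass, sub_self]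

theorem reduceHom_totalD_iprolong_sub (hS : S.orthonomic) (hpass : S.passive) (j : Fin p)
    {R : JetRing p q} (hR : S.inB R) :
    S.reduceHom (totalD p q j (S.iprolong Q R)) - S.iprolong Q (S.reduceHom (totalD p q j R))
      = S.commField Q j R := by
  rw [inB_iff_mem_supported, supported_eq_adjoin_X] at hR
  induction hR using Algebra.adjoin_induction with
  | mem _ hx =>
    obtain ⟨v, hv, rfl⟩ := hx
    exact reduceHom_totalD_iprolong_sub_X hS hpass j hv
  | algebraMap r => simp
  | add x y _ _ hx hy =>
    simp only [map_add]
    linear_combination hx + hy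
  | mul x y hx' hy' hx hy =>
    have hBx : S.inB x := S.inB_iff_mem_supported.mpr hx'
    have hBy : S.inB y := S.inB_iff_mem_supported.mpr hy'
    simp only [Derivation.leibniz, smul_eq_mul, map_add, map_mul, S.reduceHom_of_inB hBx,
      S.reduceHom_of_inB hBy, S.reduceHom_of_inB (S.inB_iprolong Q hBx),
      S.reduceHom_of_inB (S.inB_iprolong Q hBy)]
    linear_combination x * hy + y * hx

end OrthoSystem

theorem commutator_formula_general (S : OrthoSystem p q n)
    (hS : S.orthonomic) (hpass : S.passive)
    (Q : Fin q → JetRing p q) (j : Fin p) :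
    ∀ P' : JetRing p q, S.inB P' →
      S.dfrak j (S.iprolong Q P') - S.iprolong Q (S.dfrak j P')
        = S.commField Q j P' := by
  intro P' hP'
  rw [S.dfrak_eq_reduceHom hS hpass, S.dfrak_eq_reduceHom hS hpass]
  exact S.reduceHom_totalD_iprolong_sub hS hpass j hP'

/-- The commutator of the intrinsic derivative and the intrinsic prolongation is
the vector field `[𝔇_j, 𝔭𝔯_Q] = Σ (𝔇_{J^α M} Q^{i^α} − 𝔭𝔯_Q 𝔇_M P^α)
∂/∂u^{i^α}_{J^α M/j}`, summed over `(i^α, J^α M/j) ∈ S \ S_j`. -/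
theorem commutator_formula (S : OrthoSystem p q n)
    (hS : S.orthonomic) (hpass : S.passive)
    (Q : Fin q → JetRing p q) (hQ : ∀ j, S.inB (Q j)) (j : Fin p) :
    ∀ P' : JetRing p q, S.inB P' →
      S.dfrak j (S.iprolong Q P') - S.iprolong Q (S.dfrak j P')
        = S.commField Q j P' :=
  commutator_formula_general S hS hpass Q j
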